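/- Let u be a convex function on ℝⁿ, and let T = ∇u wherever differentiable. If ∇u pushes a finite measure μ forward to ν, and v is another convex function with ∇v also pushing μ to ν, and both are optimal for the quadratic cost, then ∇u = ∇v μ-a.e. (uniqueness of the optimal map / Brenier map). -/

import Mathlib

/-!
Let `h = u* - v*` be the difference of the Legendre transforms, taken in `EReal` so that no
finiteness of `u*`, `v*` is needed. At a point `x` where `p = ∇u(x)` and `q = ∇v(x)` exist,
Fenchel's equality for the gradients and Fenchel–Young for the other function give
`h p ≤ v x - u x ≤ h q`. Since `∇u` and `∇v` have the same law, so do `h ∘ ∇u` and `h ∘ ∇v`, and an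
a.e. inequality between two functions with the same law on a finite measure space is an a.e.
equality. Hence `v x - u x ≤ h p` a.e., which says that `p` is a subgradient of `v` at `x`, so
`p = ∇v(x)`.
-/

open MeasureTheory Set

open scoped RealInnerProductSpace

section Subgradient

variable {F : Type*} [NormedAddCommGroup F] [InnerProductSpace ℝ F]

def HasSubgradientAt (u : F → ℝ) (p x : F) : Prop :=
  ∀ z, u x + ⟪p, z - x⟫ ≤ u z

variable [CompleteSpace F] {u : F → ℝ} {p q x : F}

theorem ConvexOn.hasSubgradientAt_of_hasGradientAt (hu : ConvexOn ℝ univ u)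
    (h : HasGradientAt u p x) : HasSubgradientAt u p x := by
  intro z
  have hline : HasDerivAt (u ∘ AffineMap.lineMap x z) ⟪p, z - x⟫ (0 : ℝ) := by
    have h' : HasFDerivAt u (InnerProductSpace.toDual ℝ F p) (AffineMap.lineMap x z (0 : ℝ)) := by
      simpa using h.hasFDerivAt
    simpa using h'.comp_hasDerivAt (0 : ℝ) AffineMap.hasDerivAt_lineMap
  have := (hu.comp_affineMap (AffineMap.lineMap x z)).le_slope_of_hasDerivAt
    (mem_univ 0) (mem_univ 1) zero_lt_one hline
  simp only [slope_def_field, Function.comp_apply, AffineMap.lineMap_apply_one,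
    AffineMap.lineMap_apply_zero, sub_zero, div_one] at this
  linarith

theorem HasSubgradientAt.eq_of_hasGradientAt (hq : HasSubgradientAt u q x)
    (h : HasGradientAt u p x) : q = p := by
  have hmin : IsLocalMin (fun z => u z - ⟪q, z⟫) x :=
    Filter.Eventually.of_forall fun z => by
      have := hq z
      rw [inner_sub_right] at this
      linarith
  have := hmin.hasFDerivAt_eq_zero (h.hasFDerivAt.sub (innerSL ℝ q).hasFDerivAt)
  rw [sub_eq_zero] at this
  exact ((InnerProductSpace.toDual ℝ F).injective (by ext y; simpa using congr($this y))).symm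

end Subgradient

section Legendre

variable {F : Type*} [NormedAddCommGroup F] [InnerProductSpace ℝ F] {u v : F → ℝ} {p x : F}

noncomputable def legendreTransform (u : F → ℝ) (y : F) : EReal :=
  ⨆ z, ((⟪z, y⟫ - u z : ℝ) : EReal)

theorem inner_sub_le_legendreTransform (u : F → ℝ) (y z : F) :
    ((⟪z, y⟫ - u z : ℝ) : EReal) ≤ legendreTransform u y :=
  le_iSup (fun z => ((⟪z, y⟫ - u z : ℝ) : EReal)) z

theorem measurable_legendreTransform [MeasurableSpace F] [OpensMeasurableSpace F] (u : F → ℝ) :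
    Measurable (legendreTransform u) :=
  LowerSemicontinuous.measurable <| lowerSemicontinuous_iSup fun _ =>
    (continuous_coe_real_ereal.comp
      ((continuous_const.inner continuous_id).sub continuous_const)).lowerSemicontinuous

theorem legendreTransform_le_iff_hasSubgradientAt :
    legendreTransform u p ≤ ((⟪x, p⟫ - u x : ℝ) : EReal) ↔ HasSubgradientAt u p x := by
  simp only [legendreTransform, iSup_le_iff, EReal.coe_le_coe_iff, HasSubgradientAt,
    inner_sub_right, real_inner_comm p]
  exact forall_congr' fun z => by constructor <;> intro h <;> linarith

theorem HasSubgradientAt.legendreTransform_eq (h : HasSubgradientAt u p x) :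
    legendreTransform u p = ((⟪x, p⟫ - u x : ℝ) : EReal) :=
  le_antisymm (legendreTransform_le_iff_hasSubgradientAt.2 h)
    (inner_sub_le_legendreTransform u p x)

theorem HasSubgradientAt.legendreTransform_sub_le (h : HasSubgradientAt u p x) (v : F → ℝ) :
    legendreTransform u p - legendreTransform v p ≤ ((v x - u x : ℝ) : EReal) :=
  calc legendreTransform u p - legendreTransform v p
      ≤ ((⟪x, p⟫ - u x : ℝ) : EReal) - ((⟪x, p⟫ - v x : ℝ) : EReal) :=
        EReal.sub_le_sub h.legendreTransform_eq.le (inner_sub_le_legendreTransform v p x)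
    _ = ((v x - u x : ℝ) : EReal) := by rw [← EReal.coe_sub]; ring_nf

theorem HasSubgradientAt.le_legendreTransform_sub (h : HasSubgradientAt v p x) (u : F → ℝ) :
    ((v x - u x : ℝ) : EReal) ≤ legendreTransform u p - legendreTransform v p :=
  calc ((v x - u x : ℝ) : EReal)
      = ((⟪x, p⟫ - u x : ℝ) : EReal) - ((⟪x, p⟫ - v x : ℝ) : EReal) := by
        rw [← EReal.coe_sub]; ring_nf
    _ ≤ legendreTransform u p - legendreTransform v p :=
        EReal.sub_le_sub (inner_sub_le_legendreTransform u p x) h.legendreTransform_eq.le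

theorem HasSubgradientAt.hasSubgradientAt_of_le_legendreTransform_sub
    (h : HasSubgradientAt u p x)
    (hle : ((v x - u x : ℝ) : EReal) ≤ legendreTransform u p - legendreTransform v p) :
    HasSubgradientAt v p x := by
  rw [h.legendreTransform_eq] at hle
  refine legendreTransform_le_iff_hasSubgradientAt.1 ?_
  calc legendreTransform v p ≤ ((⟪x, p⟫ - u x : ℝ) : EReal) - ((v x - u x : ℝ) : EReal) := by
        rwa [EReal.le_sub_iff_add_le (.inl (EReal.coe_ne_bot _)) (.inl (EReal.coe_ne_top _)),
          add_comm, ← EReal.le_sub_iff_add_le (.inr (EReal.coe_ne_bot _))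
            (.inr (EReal.coe_ne_top _))]
    _ = ((⟪x, p⟫ - v x : ℝ) : EReal) := by rw [← EReal.coe_sub]; ring_nf

end Legendre

theorem ae_eq_of_ae_le_of_map_eq {α β : Type*} [MeasurableSpace α] {μ : Measure α}
    [IsFiniteMeasure μ] [LinearOrder β] [DenselyOrdered β] [TopologicalSpace β] [OrderTopology β]
    [TopologicalSpace.SeparableSpace β] [MeasurableSpace β] [OpensMeasurableSpace β]
    {X Y : α → β} (hX : AEMeasurable X μ) (hY : AEMeasurable Y μ) (hle : X ≤ᵐ[μ] Y)
    (hmap : μ.map X = μ.map Y) : X =ᵐ[μ] Y := by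
  have htail (t : β) : X ⁻¹' Ioi t =ᵐ[μ] Y ⁻¹' Ioi t :=
    ae_eq_of_ae_subset_of_measure_ge (hle.mono fun _ hXY hX => lt_of_lt_of_le hX hXY)
      (by rw [← Measure.map_apply_of_aemeasurable hY measurableSet_Ioi, ← hmap,
        Measure.map_apply_of_aemeasurable hX measurableSet_Ioi])
      (hX.nullMeasurable measurableSet_Ioi) (measure_ne_top _ _)
  obtain ⟨D, hDc, hD⟩ := TopologicalSpace.exists_countable_dense β
  have hsep : ∀ᵐ a ∂μ, ∀ t ∈ D, (t < X a ↔ t < Y a) :=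
    (ae_ball_iff hDc).2 fun t _ => (htail t).mono fun _ h => Iff.of_eq h
  filter_upwards [hle, hsep] with a hXY hsep
  refine hXY.antisymm (not_lt.1 fun hlt => ?_)
  obtain ⟨t, htD, hXt, htY⟩ := hD.exists_between hlt
  exact hXt.not_gt ((hsep t htD).2 htY)

theorem brenier_map_unique_general {n : ℕ}
    (μ ν : Measure (EuclideanSpace ℝ (Fin n)))
    [IsFiniteMeasure μ]
    (u v : EuclideanSpace ℝ (Fin n) → ℝ)
    (hu : ConvexOn ℝ univ u) (hv : ConvexOn ℝ univ v)
    (Gu Gv : EuclideanSpace ℝ (Fin n) → EuclideanSpace ℝ (Fin n))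
    (hGu : ∀ᵐ x ∂μ, HasGradientAt u (Gu x) x)
    (hGv : ∀ᵐ x ∂μ, HasGradientAt v (Gv x) x)
    (hGum : AEMeasurable Gu μ) (hGvm : AEMeasurable Gv μ)
    (hpushu : Measure.map Gu μ = ν) (hpushv : Measure.map Gv μ = ν) :
    Gu =ᵐ[μ] Gv := by
  have hsubu : ∀ᵐ x ∂μ, HasSubgradientAt u (Gu x) x :=
    hGu.mono fun _ hx => hu.hasSubgradientAt_of_hasGradientAt hx
  have hsubv : ∀ᵐ x ∂μ, HasSubgradientAt v (Gv x) x :=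
    hGv.mono fun _ hx => hv.hasSubgradientAt_of_hasGradientAt hx
  set h := legendreTransform u - legendreTransform v
  have hh : Measurable h := (measurable_legendreTransform u).sub (measurable_legendreTransform v)
  have hle : h ∘ Gu ≤ᵐ[μ] h ∘ Gv := by
    filter_upwards [hsubu, hsubv] with x hxu hxv
    exact (hxu.legendreTransform_sub_le v).trans (hxv.le_legendreTransform_sub u)
  have hlaw : μ.map (h ∘ Gu) = μ.map (h ∘ Gv) := by
    rw [← AEMeasurable.map_map_of_aemeasurable hh.aemeasurable hGum,
      ← AEMeasurable.map_map_of_aemeasurable hh.aemeasurable hGvm, hpushu, hpushv]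
  have heq := ae_eq_of_ae_le_of_map_eq (hh.comp_aemeasurable hGum) (hh.comp_aemeasurable hGvm)
    hle hlaw
  filter_upwards [heq, hsubu, hsubv, hGv] with x hx hxu hxv hgrad
  exact (hxu.hasSubgradientAt_of_le_legendreTransform_sub
    ((hxv.le_legendreTransform_sub u).trans hx.symm.le)).eq_of_hasGradientAt hgrad

/-- Uniqueness of the Brenier map: if the gradients of two convex functions both
push `μ` (absolutely continuous, finite) forward to `ν`, they agree `μ`-a.e. -/
theorem brenier_map_unique {n : ℕ}
    (μ ν : Measure (EuclideanSpace ℝ (Fin n)))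
    [IsFiniteMeasure μ] [IsFiniteMeasure ν]
    (hac : μ ≪ (volume : Measure (EuclideanSpace ℝ (Fin n))))
    (u v : EuclideanSpace ℝ (Fin n) → ℝ)
    (hu : ConvexOn ℝ univ u) (hv : ConvexOn ℝ univ v)
    (Gu Gv : EuclideanSpace ℝ (Fin n) → EuclideanSpace ℝ (Fin n))
    (hGu : ∀ᵐ x ∂μ, HasGradientAt u (Gu x) x)
    (hGv : ∀ᵐ x ∂μ, HasGradientAt v (Gv x) x)
    (hGum : AEMeasurable Gu μ) (hGvm : AEMeasurable Gv μ)
    (hpushu : Measure.map Gu μ = ν) (hpushv : Measure.map Gv μ = ν) :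
    Gu =ᵐ[μ] Gv :=
  brenier_map_unique_general μ ν u v hu hv Gu Gv hGu hGv hGum hGvm hpushu hpushv
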